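/- Let (V,w) be a weighted graph, let 0 < ε ≤ 1/2, let V_1,…,V_c ⊆ V be pairwise disjoint sets, and let k_1,…,k_c be integers with k_i ≥ 1 and 2k_i ≤ |V_i| ≤ k_i/ε for each i ∈ [c]. Suppose that every unordered pair {u,v} with w(u,v) > 0 has at least one endpoint in V_1 ∪ … ∪ V_c. Then there exists S ⊆ V_1 ∪ … ∪ V_c with |S ∩ V_i| = k_i for every i ∈ [c] such that δ_w(S) ≥ ε · Σ_{{u,v}} w(u,v), the sum being over all unordered pairs of distinct vertices. (Lemma 5.2, part 2.) -/
import Mathlib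


open Finset

section AuxCount
variable {V : Type*} [DecidableEq V]

lemma PC0set (s : Finset V) (b : V) (m : ℕ) :
    (s.powersetCard m).filter (fun A => b ∉ A) = (s.erase b).powersetCard m := by
  ext A
  simp only [mem_filter, mem_powersetCard, subset_erase]
  tauto

lemma PC0 {s : Finset V} {b : V} (hb : b ∈ s) (m : ℕ) :
    ((s.powersetCard m).filter (fun A => b ∉ A)).card = (s.card - 1).choose m := by
  rw [PC0set, card_powersetCard, card_erase_of_mem hb]

lemma PC1 {s : Finset V} {a : V} (ha : a ∈ s) (m : ℕ) :
    ((s.powersetCard (m+1)).filter (fun A => a ∈ A)).card = (s.card - 1).choose m := by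
  have key : ((s.powersetCard (m+1)).filter (fun A => a ∈ A)).card
      = ((s.erase a).powersetCard m).card := by
    refine Finset.card_bij' (fun A _ => A.erase a) (fun B _ => insert a B) ?_ ?_ ?_ ?_
    · intro A hA
      simp only [mem_filter, mem_powersetCard] at hA
      simp only [mem_powersetCard]
      exact ⟨erase_subset_erase a hA.1.1, by rw [card_erase_of_mem hA.2, hA.1.2]; omega⟩
    · intro B hB
      simp only [mem_powersetCard, subset_erase] at hB
      simp only [mem_filter, mem_powersetCard]
      refine ⟨⟨insert_subset ha hB.1.1, ?_⟩, mem_insert_self _ _⟩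
      rw [card_insert_of_notMem hB.1.2, hB.2]
    · intro A hA
      simp only [mem_filter] at hA
      exact insert_erase hA.2
    · intro B hB
      simp only [mem_powersetCard, subset_erase] at hB
      exact erase_insert hB.1.2
  rw [key, card_powersetCard, card_erase_of_mem ha]

lemma PC2 {s : Finset V} {a b : V} (ha : a ∈ s) (hb : b ∈ s) (hab : a ≠ b) (m : ℕ) :
    ((s.powersetCard (m+1)).filter (fun A => a ∈ A ∧ b ∉ A)).card = (s.card - 2).choose m := by
  have h1 : (s.powersetCard (m+1)).filter (fun A => a ∈ A ∧ b ∉ A)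
      = ((s.powersetCard (m+1)).filter (fun A => b ∉ A)).filter (fun A => a ∈ A) := by
    rw [filter_filter]
    apply filter_congr; intro A _; tauto
  rw [h1, PC0set, PC1 (mem_erase.2 ⟨hab, ha⟩), card_erase_of_mem hb, Nat.sub_sub]

end AuxCount

section PiCount
variable {ι : Type*} [DecidableEq ι] [Fintype ι] {δ : ι → Type*} [∀ i, DecidableEq (δ i)]

lemma card_filter_coord (s : ∀ i, Finset (δ i)) (a : ι) (F : Finset (δ a)) (hF : F ⊆ s a) :
    ((Fintype.piFinset s).filter (fun f => f a ∈ F)).card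
      = F.card * ∏ j ∈ univ.erase a, (s j).card := by
  rw [← Fintype.piFinset_update_eq_filter_piFinset_mem s a hF, Fintype.card_piFinset]
  calc (∏ j, (Function.update s a F j).card)
      = ∏ j, Function.update (fun j => (s j).card) a F.card j :=
        Fintype.prod_congr _ _ fun j => by
          obtain rfl | h := eq_or_ne j a <;> simp [*]
    _ = F.card * ∏ j ∈ univ.erase a, (s j).card := by
        rw [Finset.prod_update_of_mem (mem_univ a), sdiff_singleton_eq_erase]

lemma card_filter_coord2 (s : ∀ i, Finset (δ i)) (a b : ι) (hab : a ≠ b)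
    (F : Finset (δ a)) (hF : F ⊆ s a) (G : Finset (δ b)) (hG : G ⊆ s b) :
    ((Fintype.piFinset s).filter (fun f => f a ∈ F ∧ f b ∈ G)).card
      = F.card * G.card * ∏ j ∈ (univ.erase a).erase b, (s j).card := by
  rw [← filter_filter, ← Fintype.piFinset_update_eq_filter_piFinset_mem s a hF]
  have hG' : G ⊆ Function.update s a F b := by
    rw [Function.update_of_ne hab.symm]; exact hG
  rw [card_filter_coord _ b G hG']
  have : (∏ j ∈ univ.erase b, (Function.update s a F j).card)
      = F.card * ∏ j ∈ (univ.erase b).erase a, (s j).card := by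
    calc (∏ j ∈ univ.erase b, (Function.update s a F j).card)
        = ∏ j ∈ univ.erase b, Function.update (fun j => (s j).card) a F.card j :=
          Finset.prod_congr rfl fun j _ => by
            obtain rfl | h := eq_or_ne j a <;> simp [*]
      _ = _ := by
          rw [Finset.prod_update_of_mem (mem_erase.2 ⟨hab, mem_univ a⟩),
            sdiff_singleton_eq_erase]
  rw [this, erase_right_comm]
  ring

end PiCount

lemma chooseI1' (n m : ℕ) : (n+1) * n.choose m = (m+1) * ((n+1).choose (m+1)) :=
  (Nat.add_one_mul_choose_eq n m).trans (Nat.mul_comm _ _)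

lemma chooseI2x (n m : ℕ) : (n - m) * ((n+1).choose (m+1)) = (n+1) * (n.choose (m+1)) := by
  rcases le_or_gt m n with h | h
  · have e1 : (n+1).choose (m+1) = n.choose m + n.choose (m+1) := Nat.choose_succ_succ n m
    have h2 : (n+1) * ((n+1).choose (m+1))
        = (m+1) * ((n+1).choose (m+1)) + (n+1) * (n.choose (m+1)) := by
      calc (n+1) * ((n+1).choose (m+1))
          = (n+1) * (n.choose m) + (n+1) * (n.choose (m+1)) := by rw [e1, Nat.mul_add]
        _ = _ := by rw [chooseI1']
    have a1 : (n+1) * ((n+1).choose (m+1))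
        = n * ((n+1).choose (m+1)) + (n+1).choose (m+1) := by ring
    have a2 : (m+1) * ((n+1).choose (m+1))
        = m * ((n+1).choose (m+1)) + (n+1).choose (m+1) := by ring
    rw [Nat.sub_mul]
    omega
  · rw [Nat.choose_eq_zero_of_lt (by omega), Nat.choose_eq_zero_of_lt (by omega)]
    simp

lemma chooseI2' (n m : ℕ) : (n + 1 - m) * ((n+1).choose m) = (n+1) * (n.choose m) := by
  cases m with
  | zero => simp
  | succ m =>
    have h : n + 1 - (m + 1) = n - m := by omega
    rw [h]; exact chooseI2x n m

lemma keyA (ε : ℝ) (n k : ℕ) (hk : 1 ≤ k) (hn : 2*k ≤ n) (hεn : ε * n ≤ k) :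
    ε * (n.choose k : ℝ) ≤ ((n-1).choose (k-1) : ℝ) := by
  obtain ⟨m, rfl⟩ : ∃ m, k = m + 1 := ⟨k-1, by omega⟩
  obtain ⟨p, rfl⟩ : ∃ p, n = p + 1 := ⟨n-1, by omega⟩
  simp only [Nat.add_sub_cancel]
  have hid : ((p+1 : ℕ) : ℝ) * ((p.choose m : ℕ) : ℝ)
      = ((m+1 : ℕ) : ℝ) * (((p+1).choose (m+1) : ℕ) : ℝ) := by
    exact_mod_cast congrArg (Nat.cast : ℕ → ℝ) (chooseI1' p m)
  push_cast at hid hεn ⊢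
  have hC : (0:ℝ) ≤ ((p+1).choose (m+1) : ℝ) := Nat.cast_nonneg _
  nlinarith [mul_le_mul_of_nonneg_right hεn hC]

lemma keyB (ε : ℝ) (n₁ k₁ n₂ k₂ : ℕ)
    (h11 : 1 ≤ k₁) (h12 : 2*k₁ ≤ n₁) (hε1 : ε * n₁ ≤ k₁)
    (h21 : 1 ≤ k₂) (h22 : 2*k₂ ≤ n₂) (hε2 : ε * n₂ ≤ k₂) :
    ε * ((n₁.choose k₁ : ℝ) * (n₂.choose k₂ : ℝ)) ≤
      ((n₁-1).choose (k₁-1) : ℝ) * ((n₂-1).choose k₂ : ℝ)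
      + ((n₂-1).choose (k₂-1) : ℝ) * ((n₁-1).choose k₁ : ℝ) := by
  obtain ⟨m₁, rfl⟩ : ∃ m, k₁ = m + 1 := ⟨k₁-1, by omega⟩
  obtain ⟨p₁, rfl⟩ : ∃ p, n₁ = p + 1 := ⟨n₁-1, by omega⟩
  obtain ⟨m₂, rfl⟩ : ∃ m, k₂ = m + 1 := ⟨k₂-1, by omega⟩
  obtain ⟨p₂, rfl⟩ : ∃ p, n₂ = p + 1 := ⟨n₂-1, by omega⟩
  simp only [Nat.add_sub_cancel]
  set X₁ : ℝ := ((p₁+1).choose (m₁+1) : ℝ) with hX₁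
  set X₂ : ℝ := ((p₂+1).choose (m₂+1) : ℝ) with hX₂
  set Y₁ : ℝ := (p₁.choose m₁ : ℝ) with hY₁
  set Y₂ : ℝ := (p₂.choose m₂ : ℝ) with hY₂
  set Z₁ : ℝ := (p₁.choose (m₁+1) : ℝ) with hZ₁
  set Z₂ : ℝ := (p₂.choose (m₂+1) : ℝ) with hZ₂
  have id11 : ((p₁:ℝ)+1) * Y₁ = ((m₁:ℝ)+1) * X₁ := by
    rw [hY₁, hX₁]; exact_mod_cast congrArg (Nat.cast : ℕ → ℝ) (chooseI1' p₁ m₁)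
  have id12 : ((p₂:ℝ)+1) * Y₂ = ((m₂:ℝ)+1) * X₂ := by
    rw [hY₂, hX₂]; exact_mod_cast congrArg (Nat.cast : ℕ → ℝ) (chooseI1' p₂ m₂)
  have id21 : ((p₁:ℝ) - (m₁:ℝ)) * X₁ = ((p₁:ℝ)+1) * Z₁ := by
    have h : ((p₁ - m₁ : ℕ) : ℝ) * X₁ = ((p₁:ℝ)+1) * Z₁ := by
      rw [hX₁, hZ₁]; exact_mod_cast congrArg (Nat.cast : ℕ → ℝ) (chooseI2x p₁ m₁)
    rwa [Nat.cast_sub (by omega)] at h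
  have id22 : ((p₂:ℝ) - (m₂:ℝ)) * X₂ = ((p₂:ℝ)+1) * Z₂ := by
    have h : ((p₂ - m₂ : ℕ) : ℝ) * X₂ = ((p₂:ℝ)+1) * Z₂ := by
      rw [hX₂, hZ₂]; exact_mod_cast congrArg (Nat.cast : ℕ → ℝ) (chooseI2x p₂ m₂)
    rwa [Nat.cast_sub (by omega)] at h
  push_cast at hε1 hε2
  have hX₁0 : 0 ≤ X₁ := Nat.cast_nonneg _
  have hX₂0 : 0 ≤ X₂ := Nat.cast_nonneg _
  have hn₁ : (2*(m₁:ℝ)+2) ≤ (p₁:ℝ)+1 := by exact_mod_cast h12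
  have hn₂ : (2*(m₂:ℝ)+2) ≤ (p₂:ℝ)+1 := by exact_mod_cast h22
  have hscal : ε * (((p₁:ℝ)+1) * ((p₂:ℝ)+1)) ≤
      ((m₁:ℝ)+1) * (((p₂:ℝ)+1) - ((m₂:ℝ)+1)) + ((m₂:ℝ)+1) * (((p₁:ℝ)+1) - ((m₁:ℝ)+1)) := by
    nlinarith [mul_le_mul_of_nonneg_right hε1 (show (0:ℝ) ≤ ((p₂:ℝ)+1) - 2*((m₂:ℝ)+1) + ((p₂:ℝ)+1) by nlinarith),
      mul_le_mul_of_nonneg_right hε2 (show (0:ℝ) ≤ ((p₁:ℝ)+1) - 2*((m₁:ℝ)+1) + ((p₁:ℝ)+1) by nlinarith)]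
  have e : (((m₁:ℝ)+1) * (((p₂:ℝ)+1) - ((m₂:ℝ)+1)) + ((m₂:ℝ)+1) * (((p₁:ℝ)+1) - ((m₁:ℝ)+1)))
        * (X₁ * X₂)
      = (((p₁:ℝ)+1) * ((p₂:ℝ)+1)) * (Y₁ * Z₂ + Y₂ * Z₁) := by
    linear_combination (-(((p₂:ℝ)+1) * Z₂)) * id11 + (((m₁:ℝ)+1) * X₁) * id22
      + (-(((p₁:ℝ)+1) * Z₁)) * id12 + (((m₂:ℝ)+1) * X₂) * id21
  have main : (((p₁:ℝ)+1) * ((p₂:ℝ)+1)) * (ε * (X₁ * X₂))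
      ≤ (((p₁:ℝ)+1) * ((p₂:ℝ)+1)) * (Y₁ * Z₂ + Y₂ * Z₁) := by
    calc (((p₁:ℝ)+1) * ((p₂:ℝ)+1)) * (ε * (X₁ * X₂))
        = (ε * (((p₁:ℝ)+1) * ((p₂:ℝ)+1))) * (X₁ * X₂) := by ring
      _ ≤ (((m₁:ℝ)+1) * (((p₂:ℝ)+1) - ((m₂:ℝ)+1)) + ((m₂:ℝ)+1) * (((p₁:ℝ)+1) - ((m₁:ℝ)+1)))
            * (X₁ * X₂) := mul_le_mul_of_nonneg_right hscal (mul_nonneg hX₁0 hX₂0)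
      _ = _ := e
  have hpos : (0:ℝ) < ((p₁:ℝ)+1) * ((p₂:ℝ)+1) := by positivity
  exact le_of_mul_le_mul_left main hpos

lemma keyC (ε : ℝ) (n k : ℕ) (hk : 1 ≤ k) (hn : 2*k ≤ n) (hεn : ε * n ≤ k) :
    ε * (n.choose k : ℝ) ≤ 2 * ((n-2).choose (k-1) : ℝ) := by
  obtain ⟨m, rfl⟩ : ∃ m, k = m + 1 := ⟨k-1, by omega⟩
  obtain ⟨p, rfl⟩ : ∃ p, n = p + 2 := ⟨n-2, by omega⟩
  have h2 : (p + 2) - 2 = p := by omega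
  have h1 : (m + 1) - 1 = m := by omega
  rw [h2, h1]
  set X : ℝ := ((p+2).choose (m+1) : ℝ) with hX
  set Y : ℝ := ((p+1).choose m : ℝ) with hY
  set Z : ℝ := (p.choose m : ℝ) with hZ
  have id1 : ((p:ℝ)+2) * Y = ((m:ℝ)+1) * X := by
    rw [hY, hX]
    have := congrArg (Nat.cast : ℕ → ℝ) (chooseI1' (p+1) m)
    push_cast at this ⊢
    linarith [this]
  have id2 : (((p:ℝ)+1) - (m:ℝ)) * Y = ((p:ℝ)+1) * Z := by
    rw [hY, hZ]
    have := congrArg (Nat.cast : ℕ → ℝ) (chooseI2' p m)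
    push_cast [Nat.cast_sub (show m ≤ p + 1 by omega)] at this
    linarith [this]
  push_cast at hεn
  have hX0 : 0 ≤ X := Nat.cast_nonneg _
  have hY0 : 0 ≤ Y := Nat.cast_nonneg _
  have hmp : 2*(m:ℝ) + 2 ≤ (p:ℝ) + 2 := by exact_mod_cast hn
  have hscal : ε * (((p:ℝ)+2) * ((p:ℝ)+1)) ≤ 2 * ((((p:ℝ)+1) - (m:ℝ)) * ((m:ℝ)+1)) := by
    nlinarith [mul_le_mul_of_nonneg_right hεn (show (0:ℝ) ≤ (p:ℝ)+1 by positivity)]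
  have e : (2 * ((((p:ℝ)+1) - (m:ℝ)) * ((m:ℝ)+1))) * X = (((p:ℝ)+2) * ((p:ℝ)+1)) * (2 * Z) := by
    linear_combination (-2*(((p:ℝ)+1) - (m:ℝ))) * id1 + (2*((p:ℝ)+2)) * id2
  have main : (((p:ℝ)+2) * ((p:ℝ)+1)) * (ε * X) ≤ (((p:ℝ)+2) * ((p:ℝ)+1)) * (2 * Z) := by
    calc (((p:ℝ)+2) * ((p:ℝ)+1)) * (ε * X) = (ε * (((p:ℝ)+2) * ((p:ℝ)+1))) * X := by ring
      _ ≤ (2 * ((((p:ℝ)+1) - (m:ℝ)) * ((m:ℝ)+1))) * X := mul_le_mul_of_nonneg_right hscal hX0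
      _ = _ := e
  have hpos : (0:ℝ) < ((p:ℝ)+2) * ((p:ℝ)+1) := by positivity
  exact le_of_mul_le_mul_left main hpos


/-- The cut value of a set `S`: total weight of pairs with exactly one endpoint in `S`. -/
noncomputable def cutVal {V : Type*} [Fintype V] [DecidableEq V]
    (w : V → V → ℝ) (S : Finset V) : ℝ :=
  ∑ u ∈ S, ∑ v ∈ Sᶜ, w u v

/-- The total edge weight: the sum of `w(u,v)` over unordered pairs of distinct vertices. -/
noncomputable def totalWeight {V : Type*} [Fintype V] [DecidableEq V]
    (w : V → V → ℝ) : ℝ :=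
  (∑ u, ∑ v ∈ Finset.univ.erase u, w u v) / 2

/-- Lemma 5.2, part 2: with pairwise disjoint `V_1, …, V_c`, budgets `k_i ≥ 1` with
`2k_i ≤ |V_i| ≤ k_i/ε`, and every positive-weight pair having an endpoint in
`V_1 ∪ … ∪ V_c`, some feasible set (taking exactly `k_i` vertices from each `V_i`) cuts
at least an `ε` fraction of the total edge weight. -/
theorem constrained_kernel_opt_fraction {V : Type*} [Fintype V] [DecidableEq V]
    (w : V → V → ℝ) (hsymm : ∀ u v, w u v = w v u) (hnonneg : ∀ u v, 0 ≤ w u v)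
    (ε : ℝ) (hε0 : 0 < ε) (hε : ε ≤ 1 / 2)
    (c : ℕ) (Vb : Fin c → Finset V)
    (hVdisj : ∀ i j, i ≠ j → Disjoint (Vb i) (Vb j))
    (k : Fin c → ℕ) (hk1 : ∀ i, 1 ≤ k i)
    (hlow : ∀ i, 2 * k i ≤ (Vb i).card)
    (hhigh : ∀ i, ((Vb i).card : ℝ) ≤ (k i : ℝ) / ε)
    (hcover : ∀ u v : V, u ≠ v → 0 < w u v →
      u ∈ Finset.univ.biUnion Vb ∨ v ∈ Finset.univ.biUnion Vb) :
    ∃ S ⊆ Finset.univ.biUnion Vb, (∀ i, (S ∩ Vb i).card = k i) ∧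
      ε * totalWeight w ≤ cutVal w S := by
  classical
  set U : Finset V := Finset.univ.biUnion Vb with hU
  set t : Fin c → Finset (Finset V) := fun i => (Vb i).powersetCard (k i) with ht
  set Ω : Finset (Fin c → Finset V) := Fintype.piFinset t with hΩdef
  have hεn : ∀ i, ε * ((Vb i).card : ℝ) ≤ (k i : ℝ) := by
    intro i
    have h := hhigh i
    rw [le_div_iff₀ hε0] at h
    linarith
  have cardt : ∀ i, (t i).card = ((Vb i).card).choose (k i) := fun i => card_powersetCard _ _
  have hΩcard : Ω.card = ∏ i, (t i).card := Fintype.card_piFinset t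
  have hΩne : Ω.Nonempty := by
    rw [hΩdef, Fintype.piFinset_nonempty]
    intro i
    rw [ht]
    exact powersetCard_nonempty.2 (by have := hlow i; omega)
  have hmemt : ∀ f ∈ Ω, ∀ i, f i ∈ t i := by
    intro f hf i
    rw [hΩdef, Fintype.mem_piFinset] at hf
    exact hf i
  have hf_mem : ∀ f ∈ Ω, ∀ i, f i ⊆ Vb i ∧ (f i).card = k i := by
    intro f hf i
    have := hmemt f hf i
    rw [ht, mem_powersetCard] at this
    exact this
  have hmemS : ∀ f ∈ Ω, ∀ a : Fin c, ∀ u ∈ Vb a, (u ∈ univ.biUnion f ↔ u ∈ f a) := by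
    intro f hf a u hu
    constructor
    · intro h
      obtain ⟨j, _, hj⟩ := mem_biUnion.1 h
      rcases eq_or_ne j a with rfl | hja
      · exact hj
      · exact absurd hu (disjoint_left.1 (hVdisj j a hja) ((hf_mem f hf j).1 hj))
    · intro h; exact mem_biUnion.2 ⟨a, mem_univ a, h⟩
  have hnotS : ∀ f ∈ Ω, ∀ u, u ∉ U → u ∉ univ.biUnion f := by
    intro f hf u hu hmem
    obtain ⟨j, _, hj⟩ := mem_biUnion.1 hmem
    exact hu (mem_biUnion.2 ⟨j, mem_univ j, (hf_mem f hf j).1 hj⟩)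
  set N : V → V → ℕ :=
    fun u v => (Ω.filter (fun f => u ∈ univ.biUnion f ∧ v ∉ univ.biUnion f)).card with hN
  -- counting within one block
  have cardF : ∀ a : Fin c, ∀ u ∈ Vb a,
      ((t a).filter (fun A => u ∈ A)).card = ((Vb a).card - 1).choose (k a - 1) := by
    intro a u hu
    obtain ⟨m, hm⟩ : ∃ m, k a = m + 1 := ⟨k a - 1, by have := hk1 a; omega⟩
    rw [ht]
    simp only []
    rw [hm, PC1 hu m]; norm_num
  have cardG : ∀ a : Fin c, ∀ v ∈ Vb a,
      ((t a).filter (fun A => v ∉ A)).card = ((Vb a).card - 1).choose (k a) := by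
    intro a v hv
    rw [ht]
    simp only []
    rw [PC0 hv]
  have cardH : ∀ a : Fin c, ∀ u ∈ Vb a, ∀ v ∈ Vb a, u ≠ v →
      ((t a).filter (fun A => u ∈ A ∧ v ∉ A)).card = ((Vb a).card - 2).choose (k a - 1) := by
    intro a u hu v hv huv
    obtain ⟨m, hm⟩ : ∃ m, k a = m + 1 := ⟨k a - 1, by have := hk1 a; omega⟩
    rw [ht]
    simp only []
    rw [hm, PC2 hu hv huv m]; norm_num
  -- the key per-pair bound
  have key : ∀ u v : V, u ≠ v → u ∈ U → ε * (Ω.card : ℝ) ≤ (N u v : ℝ) + (N v u : ℝ) := by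
    intro u v huv hu
    rw [hU] at hu
    obtain ⟨a, -, hua⟩ := mem_biUnion.1 hu
    by_cases hvU : v ∈ U
    · rw [hU] at hvU
      obtain ⟨b, -, hvb⟩ := mem_biUnion.1 hvU
      rcases eq_or_ne a b with rfl | hab
      · -- same block
        have hNuv : N u v
            = ((Vb a).card - 2).choose (k a - 1) * ∏ j ∈ univ.erase a, (t j).card := by
          simp only [hN]
          have heq : Ω.filter (fun f => u ∈ univ.biUnion f ∧ v ∉ univ.biUnion f)
              = Ω.filter (fun f => f a ∈ (t a).filter (fun A => u ∈ A ∧ v ∉ A)) := by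
            apply filter_congr
            intro f hf
            have h1 := hmemS f hf a u hua
            have h2 := hmemS f hf a v hvb
            have hfa := hmemt f hf a
            simp only [mem_filter, eq_iff_iff]
            constructor
            · rintro ⟨x, y⟩; exact ⟨hfa, h1.1 x, fun hvv => y (h2.2 hvv)⟩
            · rintro ⟨-, x, y⟩; exact ⟨h1.2 x, fun hvv => y (h2.1 hvv)⟩
          rw [heq, hΩdef, card_filter_coord t a _ (filter_subset _ _),
            cardH a u hua v hvb huv]
        have hNvu : N v u
            = ((Vb a).card - 2).choose (k a - 1) * ∏ j ∈ univ.erase a, (t j).card := by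
          simp only [hN]
          have heq : Ω.filter (fun f => v ∈ univ.biUnion f ∧ u ∉ univ.biUnion f)
              = Ω.filter (fun f => f a ∈ (t a).filter (fun A => v ∈ A ∧ u ∉ A)) := by
            apply filter_congr
            intro f hf
            have h1 := hmemS f hf a v hvb
            have h2 := hmemS f hf a u hua
            have hfa := hmemt f hf a
            simp only [mem_filter, eq_iff_iff]
            constructor
            · rintro ⟨x, y⟩; exact ⟨hfa, h1.1 x, fun hvv => y (h2.2 hvv)⟩
            · rintro ⟨-, x, y⟩; exact ⟨h1.2 x, fun hvv => y (h2.1 hvv)⟩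
          rw [heq, hΩdef, card_filter_coord t a _ (filter_subset _ _),
            cardH a v hvb u hua huv.symm]
        have hΩa : Ω.card = (t a).card * ∏ j ∈ univ.erase a, (t j).card := by
          rw [hΩcard, ← mul_prod_erase univ _ (mem_univ a)]
        rw [hNuv, hNvu, hΩa, cardt a]
        push_cast
        have hkey := keyC ε ((Vb a).card) (k a) (hk1 a) (hlow a) (hεn a)
        have hR0 : (0:ℝ) ≤ ∏ j ∈ univ.erase a, ((t j).card : ℝ) :=
          Finset.prod_nonneg fun j _ => Nat.cast_nonneg _
        nlinarith [mul_le_mul_of_nonneg_right hkey hR0]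
      · -- distinct blocks
        have hNuv : N u v
            = (((Vb a).card - 1).choose (k a - 1)) * (((Vb b).card - 1).choose (k b))
              * ∏ j ∈ (univ.erase a).erase b, (t j).card := by
          simp only [hN]
          have heq : Ω.filter (fun f => u ∈ univ.biUnion f ∧ v ∉ univ.biUnion f)
              = Ω.filter (fun f => f a ∈ (t a).filter (fun A => u ∈ A)
                  ∧ f b ∈ (t b).filter (fun A => v ∉ A)) := by
            apply filter_congr
            intro f hf
            have h1 := hmemS f hf a u hua
            have h2 := hmemS f hf b v hvb
            have hfa := hmemt f hf a
            have hfb := hmemt f hf b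
            simp only [mem_filter, eq_iff_iff]
            constructor
            · rintro ⟨x, y⟩; exact ⟨⟨hfa, h1.1 x⟩, ⟨hfb, fun hvv => y (h2.2 hvv)⟩⟩
            · rintro ⟨⟨-, x⟩, ⟨-, y⟩⟩; exact ⟨h1.2 x, fun hvv => y (h2.1 hvv)⟩
          rw [heq, hΩdef,
            card_filter_coord2 t a b hab _ (filter_subset _ _) _ (filter_subset _ _),
            cardF a u hua, cardG b v hvb]
        have hNvu : N v u
            = (((Vb b).card - 1).choose (k b - 1)) * (((Vb a).card - 1).choose (k a))
              * ∏ j ∈ (univ.erase a).erase b, (t j).card := by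
          simp only [hN]
          have heq : Ω.filter (fun f => v ∈ univ.biUnion f ∧ u ∉ univ.biUnion f)
              = Ω.filter (fun f => f b ∈ (t b).filter (fun A => v ∈ A)
                  ∧ f a ∈ (t a).filter (fun A => u ∉ A)) := by
            apply filter_congr
            intro f hf
            have h1 := hmemS f hf b v hvb
            have h2 := hmemS f hf a u hua
            have hfa := hmemt f hf a
            have hfb := hmemt f hf b
            simp only [mem_filter, eq_iff_iff]
            constructor
            · rintro ⟨x, y⟩; exact ⟨⟨hfb, h1.1 x⟩, ⟨hfa, fun hvv => y (h2.2 hvv)⟩⟩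
            · rintro ⟨⟨-, x⟩, ⟨-, y⟩⟩; exact ⟨h1.2 x, fun hvv => y (h2.1 hvv)⟩
          rw [heq, hΩdef,
            card_filter_coord2 t b a hab.symm _ (filter_subset _ _) _ (filter_subset _ _),
            cardF b v hvb, cardG a u hua, erase_right_comm]
        have hΩab : Ω.card
            = (t a).card * ((t b).card * ∏ j ∈ (univ.erase a).erase b, (t j).card) := by
          rw [hΩcard, ← mul_prod_erase univ _ (mem_univ a),
            ← mul_prod_erase (univ.erase a) _ (mem_erase.2 ⟨hab.symm, mem_univ b⟩)]
        rw [hNuv, hNvu, hΩab, cardt a, cardt b]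
        push_cast
        have hkey := keyB ε ((Vb a).card) (k a) ((Vb b).card) (k b)
          (hk1 a) (hlow a) (hεn a) (hk1 b) (hlow b) (hεn b)
        have hR0 : (0:ℝ) ≤ ∏ j ∈ (univ.erase a).erase b, ((t j).card : ℝ) :=
          Finset.prod_nonneg fun j _ => Nat.cast_nonneg _
        nlinarith [mul_le_mul_of_nonneg_right hkey hR0]
    · -- v not in any block
      have hNuv : N u v
          = (((Vb a).card - 1).choose (k a - 1)) * ∏ j ∈ univ.erase a, (t j).card := by
        simp only [hN]
        have heq : Ω.filter (fun f => u ∈ univ.biUnion f ∧ v ∉ univ.biUnion f)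
            = Ω.filter (fun f => f a ∈ (t a).filter (fun A => u ∈ A)) := by
          apply filter_congr
          intro f hf
          have h1 := hmemS f hf a u hua
          have hfa := hmemt f hf a
          simp only [mem_filter, eq_iff_iff]
          constructor
          · rintro ⟨x, -⟩; exact ⟨hfa, h1.1 x⟩
          · rintro ⟨-, x⟩; exact ⟨h1.2 x, hnotS f hf v hvU⟩
        rw [heq, hΩdef, card_filter_coord t a _ (filter_subset _ _), cardF a u hua]
      have hΩa : Ω.card = (t a).card * ∏ j ∈ univ.erase a, (t j).card := by
        rw [hΩcard, ← mul_prod_erase univ _ (mem_univ a)]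
      rw [hNuv, hΩa, cardt a]
      push_cast
      have hkey := keyA ε ((Vb a).card) (k a) (hk1 a) (hlow a) (hεn a)
      have hR0 : (0:ℝ) ≤ ∏ j ∈ univ.erase a, ((t j).card : ℝ) :=
        Finset.prod_nonneg fun j _ => Nat.cast_nonneg _
      have hNvu0 : (0:ℝ) ≤ (N v u : ℝ) := Nat.cast_nonneg _
      nlinarith [mul_le_mul_of_nonneg_right hkey hR0]
  -- per-pair inequality with weights
  have perpair : ∀ u v : V, u ≠ v →
      (ε * (Ω.card:ℝ)) * w u v ≤ w u v * ((N u v : ℝ) + (N v u : ℝ)) := by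
    intro u v huv
    rcases (hnonneg u v).eq_or_lt with h0 | hpos
    · rw [← h0]; simp
    · have base : ε * (Ω.card:ℝ) ≤ (N u v : ℝ) + (N v u : ℝ) := by
        rcases hcover u v huv hpos with h | h
        · exact key u v huv h
        · have h2 := key v u huv.symm h
          linarith
      calc (ε * (Ω.card:ℝ)) * w u v = w u v * (ε * (Ω.card:ℝ)) := by ring
        _ ≤ w u v * ((N u v : ℝ) + (N v u : ℝ)) :=
            mul_le_mul_of_nonneg_left base (le_of_lt hpos)
  -- expanding the cut value
  have sumfull : ∀ (T : Finset V) (g : V → ℝ), ∑ x ∈ T, g x = ∑ x, if x ∈ T then g x else 0 := by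
    intro T g
    rw [sum_ite_mem, univ_inter]
  have hcut : ∀ S : Finset V,
      cutVal w S = ∑ u, ∑ v, if u ∈ S ∧ v ∉ S then w u v else 0 := by
    intro S
    calc cutVal w S = ∑ u ∈ S, ∑ v ∈ Sᶜ, w u v := rfl
      _ = ∑ u, if u ∈ S then ∑ v ∈ Sᶜ, w u v else 0 := sumfull S _
      _ = ∑ u, ∑ v, if u ∈ S ∧ v ∉ S then w u v else 0 := by
          refine sum_congr rfl fun u _ => ?_
          by_cases h : u ∈ S
          · simp only [h, if_true, true_and]
            rw [sumfull Sᶜ (w u)]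
            refine sum_congr rfl fun v _ => ?_
            simp [mem_compl]
          · simp [h]
  have hT : ∑ f ∈ Ω, cutVal w (univ.biUnion f) = ∑ u, ∑ v, w u v * (N u v : ℝ) := by
    calc ∑ f ∈ Ω, cutVal w (univ.biUnion f)
        = ∑ f ∈ Ω, ∑ u, ∑ v,
            if u ∈ univ.biUnion f ∧ v ∉ univ.biUnion f then w u v else 0 :=
          sum_congr rfl fun f _ => hcut _
      _ = ∑ u, ∑ f ∈ Ω, ∑ v,
            if u ∈ univ.biUnion f ∧ v ∉ univ.biUnion f then w u v else 0 :=
          Finset.sum_comm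
      _ = ∑ u, ∑ v, ∑ f ∈ Ω,
            if u ∈ univ.biUnion f ∧ v ∉ univ.biUnion f then w u v else 0 :=
          sum_congr rfl fun u _ => Finset.sum_comm
      _ = ∑ u, ∑ v, w u v * (N u v : ℝ) := by
          refine sum_congr rfl fun u _ => sum_congr rfl fun v _ => ?_
          rw [sum_ite, sum_const, sum_const_zero, add_zero, nsmul_eq_mul, mul_comm]
  have hswap : ∀ g : V → V → ℝ, (∑ u, ∑ v, g u v) = ∑ u, ∑ v, g v u :=
    fun g => Finset.sum_comm
  have sum2 : ε * totalWeight w * (Ω.card:ℝ) ≤ ∑ f ∈ Ω, cutVal w (univ.biUnion f) := by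
    have lhs_eq : 2 * (ε * totalWeight w * (Ω.card:ℝ))
        = ∑ u, ∑ v ∈ univ.erase u, (ε * (Ω.card:ℝ)) * w u v := by
      rw [totalWeight]
      calc 2 * (ε * ((∑ u, ∑ v ∈ univ.erase u, w u v) / 2) * (Ω.card:ℝ))
          = (ε * (Ω.card:ℝ)) * (∑ u, ∑ v ∈ univ.erase u, w u v) := by ring
        _ = ∑ u, ∑ v ∈ univ.erase u, (ε * (Ω.card:ℝ)) * w u v := by
            rw [Finset.mul_sum]
            exact sum_congr rfl fun u _ => Finset.mul_sum _ _ _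
    have step1 : ∑ u, ∑ v ∈ univ.erase u, (ε * (Ω.card:ℝ)) * w u v
        ≤ ∑ u, ∑ v ∈ univ.erase u, w u v * ((N u v:ℝ) + (N v u:ℝ)) := by
      refine sum_le_sum fun u _ => sum_le_sum fun v hv => ?_
      exact perpair u v (Ne.symm (mem_erase.1 hv).1)
    have step2 : ∑ u, ∑ v ∈ univ.erase u, w u v * ((N u v:ℝ) + (N v u:ℝ))
        ≤ ∑ u, ∑ v, w u v * ((N u v:ℝ) + (N v u:ℝ)) := by
      refine sum_le_sum fun u _ => ?_
      refine sum_le_sum_of_subset_of_nonneg (erase_subset _ _) fun v _ _ => ?_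
      have hnn : (0:ℝ) ≤ (N u v:ℝ) + (N v u:ℝ) :=
        add_nonneg (Nat.cast_nonneg _) (Nat.cast_nonneg _)
      exact mul_nonneg (hnonneg u v) hnn
    have step3 : ∑ u, ∑ v, w u v * ((N u v:ℝ) + (N v u:ℝ))
        = 2 * ∑ f ∈ Ω, cutVal w (univ.biUnion f) := by
      have h1 : ∑ u, ∑ v, w u v * ((N u v:ℝ) + (N v u:ℝ))
          = (∑ u, ∑ v, w u v * (N u v:ℝ)) + ∑ u, ∑ v, w u v * (N v u:ℝ) := by
        simp only [mul_add, Finset.sum_add_distrib]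
      have h2 : ∑ u, ∑ v, w u v * (N v u:ℝ) = ∑ u, ∑ v, w u v * (N u v:ℝ) := by
        rw [hswap (fun u v => w u v * (N v u : ℝ))]
        exact sum_congr rfl fun u _ => sum_congr rfl fun v _ => by rw [← hsymm u v]
      rw [h1, h2, hT]
      ring
    have hfinal : 2 * (ε * totalWeight w * (Ω.card:ℝ))
        ≤ 2 * ∑ f ∈ Ω, cutVal w (univ.biUnion f) := by
      rw [lhs_eq]
      exact (step1.trans step2).trans (le_of_eq step3)
    linarith
  have havg : ∑ _f ∈ Ω, (ε * totalWeight w) ≤ ∑ f ∈ Ω, cutVal w (univ.biUnion f) := by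
    rw [sum_const, nsmul_eq_mul]
    calc (Ω.card:ℝ) * (ε * totalWeight w) = ε * totalWeight w * (Ω.card:ℝ) := by ring
      _ ≤ _ := sum2
  obtain ⟨f, hfΩ, hfle⟩ := Finset.exists_le_of_sum_le hΩne havg
  refine ⟨univ.biUnion f, ?_, ?_, hfle⟩
  · intro x hx
    obtain ⟨j, -, hj⟩ := mem_biUnion.1 hx
    exact mem_biUnion.2 ⟨j, mem_univ j, (hf_mem f hfΩ j).1 hj⟩
  · intro i
    have heq : univ.biUnion f ∩ Vb i = f i := by
      ext x
      simp only [mem_inter, mem_biUnion]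
      constructor
      · rintro ⟨⟨j, -, hj⟩, hxi⟩
        rcases eq_or_ne j i with rfl | hji
        · exact hj
        · exact absurd hxi (disjoint_left.1 (hVdisj j i hji) ((hf_mem f hfΩ j).1 hj))
      · intro hx
        exact ⟨⟨i, mem_univ i, hx⟩, (hf_mem f hfΩ i).1 hx⟩
    rw [heq]
    exact (hf_mem f hfΩ i).2
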